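/- Fix a node i of a finite simple graph G on N vertices with degree d and incident triangle count τ, and perturb every adjacency bit of G independently by randomized response with keep probability p with p²(2p−1) ≠ 0. Let τ̃_i be the number of pairs {j,k} of vertices distinct from i whose three perturbed adjacency bits for {i,j}, {i,k}, {j,k} all equal 1. Suppose the perturbed degree reported for i equals d, and suppose there is a real number θ̃ such that Σ_{exactly one neighbor} q_{jk} = d(N−d−1)·θ̃ and Σ_{neither neighbor} q_{jk} = (1/2)(N−d−1)(N−d−2)·θ̃, where q_{jk} = p if {j,k} is an edge of G and q_{jk} = 1−p otherwise, and the sums range over pairs {j,k} ⊆ V∖{i} with exactly one, respectively neither, of j, k an original neighbor of i. Then applying the calibration function (with parameters p, d̃ = d, θ̃, N) to the expected perturbed triangle count recovers the true triangle count: R(E[τ̃_i]) = τ. -/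

import Mathlib

/-!
The perturbed triangle indicator of a pair `{j, k}` is a product of three independent
perturbed bits, so its expectation is `q_ij q_ik q_jk`, where `q_e` is `p` on edges of `G` and
`1 - p` on non-edges. Grouping the pairs by how many of `j, k` are neighbours of `i`, the factor
`q_ij q_ik` is `p²`, `p(1 - p)` or `(1 - p)²`; among the `C(d, 2)` pairs of neighbours the `τ`
edges contribute `p` and the others `1 - p`. Hence the expectation is
`p²(pτ + (1 - p)(C(d, 2) - τ)) + p(1 - p) S₁ + (1 - p)² S₀`, with `S₁`, `S₀` the sums of `q`
over the pairs with one, respectively no, neighbour of `i`. This is an affine function of `τ`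
with slope `p³ - p²(1 - p) = p²(2p - 1)`, and `R` is its inverse.
-/

open Finset

attribute [local instance] Classical.propDecidable

/-- The probability weight, under randomized response with keep probability `p` applied
independently to every adjacency bit of the simple graph `G`, that the perturbed
adjacency bits are exactly `f`. -/
noncomputable def rrWeight {V : Type*} [Fintype V] [DecidableEq V]
    (G : SimpleGraph V) (p : ℝ) (f : Sym2 V → Bool) : ℝ :=
  ∏ e : Sym2 V, if (f e = true ↔ e ∈ G.edgeSet) then p else 1 - p

theorem sum_prod_mul_prod_boole {α : Type*} [Fintype α] [DecidableEq α]
    (w : α → Bool → ℝ) (hw : ∀ a, w a true + w a false = 1) (T : Finset α) :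
    ∑ f : α → Bool, (∏ a, w a (f a)) * ∏ a ∈ T, (if f a = true then 1 else 0)
      = ∏ a ∈ T, w a true := by
  have hfactor : ∀ f : α → Bool,
      (∏ a, w a (f a)) * ∏ a ∈ T, (if f a = true then 1 else 0)
        = ∏ a, w a (f a) * if a ∈ T then (if f a = true then 1 else 0) else 1 := by
    intro f
    rw [prod_mul_distrib, prod_ite_mem, univ_inter]
  have hmarginal : ∀ a, ∑ b : Bool, w a b * (if a ∈ T then (if b = true then 1 else 0) else 1)
      = if a ∈ T then w a true else 1 := by
    intro a
    split_ifs <;> simp [hw]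
  simp_rw [hfactor]
  rw [← Fintype.prod_sum fun a b => w a b * if a ∈ T then (if b = true then 1 else 0) else 1]
  simp_rw [hmarginal]
  rw [prod_ite_mem, univ_inter]

section

variable {V : Type*} [Fintype V] [DecidableEq V] (G : SimpleGraph V) (p : ℝ)

noncomputable def rrExpect (X : (Sym2 V → Bool) → ℝ) : ℝ :=
  ∑ f, rrWeight G p f * X f

theorem rrExpect_card_filter (s : Finset (Sym2 V)) (P : (Sym2 V → Bool) → Sym2 V → Prop)
    [∀ f, DecidablePred (P f)] :
    rrExpect G p (fun f => #(s.filter (P f)))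
      = ∑ e ∈ s, rrExpect G p (fun f => if P f e then 1 else 0) := by
  simp only [rrExpect, card_filter, Nat.cast_sum, Nat.cast_ite, Nat.cast_one, Nat.cast_zero,
    mul_sum]
  exact sum_comm

end

section

variable {V : Type*} (G : SimpleGraph V) [DecidableRel G.Adj] (p : ℝ)

noncomputable def rrBitProb (e : Sym2 V) : ℝ :=
  if e ∈ G.edgeSet then p else 1 - p

variable {G p} in
theorem rrBitProb_mk_of_adj {i x : V} (h : G.Adj i x) : rrBitProb G p s(i, x) = p :=
  if_pos h

variable {G p} in
theorem rrBitProb_mk_of_not_adj {i x : V} (h : ¬ G.Adj i x) : rrBitProb G p s(i, x) = 1 - p :=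
  if_neg h

theorem sum_rrBitProb (s : Finset (Sym2 V)) :
    ∑ e ∈ s, rrBitProb G p e
      = p * #(s.filter (· ∈ G.edgeSet)) + (1 - p) * (#s - #(s.filter (· ∈ G.edgeSet))) := by
  rw [← card_filter_add_card_filter_not (s := s) (· ∈ G.edgeSet)]
  push_cast
  simp only [rrBitProb, sum_ite, sum_const, nsmul_eq_mul]
  ring

variable [Fintype V] [DecidableEq V]

theorem rrExpect_prod_boole (T : Finset (Sym2 V)) :
    rrExpect G p (fun f => ∏ e ∈ T, if f e = true then 1 else 0) = ∏ e ∈ T, rrBitProb G p e := by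
  let w : Sym2 V → Bool → ℝ := fun e b => if (b = true ↔ e ∈ G.edgeSet) then p else 1 - p
  have hw : ∀ e, w e true + w e false = 1 := fun e => by
    by_cases he : e ∈ G.edgeSet <;> simp [w, he]
  -- `rrWeight` decides `e ∈ G.edgeSet` classically, so the two sides differ in instances
  convert sum_prod_mul_prod_boole w hw T using 1
  · unfold rrExpect rrWeight
    congr!
  exact prod_congr rfl fun e _ => by simp [w, rrBitProb]

theorem rrExpect_triangle_indicator {i j k : V} (hjk : j ≠ k) (hij : i ≠ j) (hik : i ≠ k) :
    rrExpect G p (fun f => if f s(j, k) = true ∧ ∀ x ∈ s(j, k), f s(i, x) = true then 1 else 0)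
      = rrBitProb G p s(i, j) * rrBitProb G p s(i, k) * rrBitProb G p s(j, k) := by
  have hjk_ij : s(j, k) ≠ s(i, j) := by simp [hij.symm, hik.symm]
  have hjk_ik : s(j, k) ≠ s(i, k) := by simp [hij.symm, hik.symm]
  have hij_ik : s(i, j) ≠ s(i, k) := by simp [hjk, hik]
  have hindicator : ∀ f : Sym2 V → Bool,
      (if f s(j, k) = true ∧ ∀ x ∈ s(j, k), f s(i, x) = true then (1 : ℝ) else 0)
        = ∏ e ∈ {s(j, k), s(i, j), s(i, k)}, if f e = true then 1 else 0 := by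
    intro f
    rw [prod_insert (by simp [hjk_ij, hjk_ik]), prod_insert (by simp [hij_ik]), prod_singleton]
    by_cases h₁ : f s(j, k) = true <;> by_cases h₂ : f s(i, j) = true <;>
      by_cases h₃ : f s(i, k) = true <;> simp [h₁, h₂, h₃]
  simp only [hindicator, rrExpect_prod_boole]
  rw [prod_insert (by simp [hjk_ij, hjk_ik]), prod_insert (by simp [hij_ik]), prod_singleton]
  ring

theorem sum_rrExpect_triangle_indicator {i : V} {s : Finset (Sym2 V)}
    (hs : ∀ e ∈ s, ¬ e.IsDiag ∧ i ∉ e) {c : ℝ}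
    (hc : ∀ j k, s(j, k) ∈ s → rrBitProb G p s(i, j) * rrBitProb G p s(i, k) = c) :
    ∑ e ∈ s, rrExpect G p (fun f => if f e = true ∧ ∀ x ∈ e, f s(i, x) = true then 1 else 0)
      = c * ∑ e ∈ s, rrBitProb G p e := by
  rw [mul_sum]
  refine sum_congr rfl fun e he => ?_
  induction e using Sym2.ind with
  | h j k =>
    obtain ⟨hdiag, hi⟩ := hs _ he
    rw [rrExpect_triangle_indicator G p (fun h => hdiag (Sym2.mk_isDiag_iff.2 h))
      (fun h => hi (h ▸ Sym2.mem_mk_left _ _)) (fun h => hi (h ▸ Sym2.mem_mk_right _ _)),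
      hc j k he]

theorem sum_sym2_split_by_endpoints {α β : Type*} [AddCommMonoid β] (A : α → Prop)
    [DecidablePred fun e : Sym2 α => ∀ x ∈ e, A x]
    [DecidablePred fun e : Sym2 α => (∃ x ∈ e, A x) ∧ ∃ x ∈ e, ¬ A x]
    [DecidablePred fun e : Sym2 α => ∀ x ∈ e, ¬ A x] (s : Finset (Sym2 α)) (w : Sym2 α → β) :
    ∑ e ∈ s, w e = ∑ e ∈ s.filter (fun e => ∀ x ∈ e, A x), w e
      + ∑ e ∈ s.filter (fun e => (∃ x ∈ e, A x) ∧ ∃ x ∈ e, ¬ A x), w e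
      + ∑ e ∈ s.filter (fun e => ∀ x ∈ e, ¬ A x), w e := by
  rw [← sum_filter_add_sum_filter_not s (fun e => ∀ x ∈ e, A x), add_assoc,
    ← sum_filter_add_sum_filter_not (s.filter fun e => ¬ ∀ x ∈ e, A x) (fun e => ∃ x ∈ e, A x),
    filter_filter, filter_filter]
  congr 3 <;> refine filter_congr fun e _ => ?_ <;> induction e using Sym2.ind <;>
    simp only [Sym2.mem_iff, exists_eq_or_imp, exists_eq_left, forall_eq_or_imp, forall_eq] <;>
    tauto

theorem card_filter_forall_adj (i : V) :
    #((univ.filter fun e : Sym2 V => ¬ e.IsDiag ∧ i ∉ e).filter fun e => ∀ x ∈ e, G.Adj i x)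
      = (G.degree i).choose 2 := by
  rw [← G.card_neighborFinset_eq_degree, ← Sym2.card_image_offDiag]
  congr 1
  ext e
  induction e using Sym2.ind with
  | h a b =>
    simp only [mem_filter, mem_univ, true_and, Sym2.mk_isDiag_iff, Sym2.mem_iff, not_or,
      forall_eq_or_imp, forall_eq, mem_image, mem_offDiag, SimpleGraph.mem_neighborFinset,
      Prod.exists, Function.uncurry_apply_pair, Sym2.eq_iff]
    constructor
    · rintro ⟨⟨hab, -⟩, ha, hb⟩
      exact ⟨a, b, ⟨ha, hb, hab⟩, .inl ⟨rfl, rfl⟩⟩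
    · rintro ⟨x, y, ⟨hx, hy, hxy⟩, ⟨rfl, rfl⟩ | ⟨rfl, rfl⟩⟩
      · exact ⟨⟨hxy, G.ne_of_adj hx, G.ne_of_adj hy⟩, hx, hy⟩
      · exact ⟨⟨Ne.symm hxy, G.ne_of_adj hy, G.ne_of_adj hx⟩, hy, hx⟩

theorem rrExpect_card_filter_triangle {i : V} {s : Finset (Sym2 V)}
    (hs : ∀ e ∈ s, ¬ e.IsDiag ∧ i ∉ e) :
    rrExpect G p (fun f => #(s.filter fun e => f e = true ∧ ∀ x ∈ e, f s(i, x) = true))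
      = p ^ 2 * ∑ e ∈ s.filter (fun e => ∀ x ∈ e, G.Adj i x), rrBitProb G p e
        + p * (1 - p) * ∑ e ∈ s.filter (fun e => (∃ x ∈ e, G.Adj i x) ∧ ∃ x ∈ e, ¬ G.Adj i x),
            rrBitProb G p e
        + (1 - p) ^ 2 * ∑ e ∈ s.filter (fun e => ∀ x ∈ e, ¬ G.Adj i x), rrBitProb G p e := by
  rw [rrExpect_card_filter, sum_sym2_split_by_endpoints (G.Adj i)]
  congr 2
  · refine sum_rrExpect_triangle_indicator G p (fun e he => hs e (filter_subset _ s he)) ?_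
    intro j k h
    obtain ⟨hj, hk⟩ := Sym2.ball.1 (mem_filter.1 h).2
    rw [rrBitProb_mk_of_adj hj, rrBitProb_mk_of_adj hk, sq]
  · refine sum_rrExpect_triangle_indicator G p (fun e he => hs e (filter_subset _ s he)) ?_
    intro j k h
    obtain ⟨⟨x, hx, hix⟩, y, hy, hiy⟩ := (mem_filter.1 h).2
    rcases Sym2.mem_iff.1 hx with rfl | rfl <;> rcases Sym2.mem_iff.1 hy with rfl | rfl
    · exact absurd hix hiy
    · rw [rrBitProb_mk_of_adj hix, rrBitProb_mk_of_not_adj hiy]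
    · rw [rrBitProb_mk_of_not_adj hiy, rrBitProb_mk_of_adj hix, mul_comm]
    · exact absurd hix hiy
  · refine sum_rrExpect_triangle_indicator G p (fun e he => hs e (filter_subset _ s he)) ?_
    intro j k h
    obtain ⟨hj, hk⟩ := Sym2.ball.1 (mem_filter.1 h).2
    rw [rrBitProb_mk_of_not_adj hj, rrBitProb_mk_of_not_adj hk, sq]

end

theorem calibration_of_expected_triangle_count_general
    {V : Type*} [Fintype V] [DecidableEq V]
    (G : SimpleGraph V) [DecidableRel G.Adj]
    (p : ℝ)
    (hp : p ^ 2 * (2 * p - 1) ≠ 0) (i : V)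
    (N d τ : ℕ) (hd : d = G.degree i)
    (allPairs pairsOne pairsNone : Finset (Sym2 V))
    (hall : allPairs = univ.filter (fun e : Sym2 V => ¬ e.IsDiag ∧ i ∉ e))
    (hone : pairsOne = allPairs.filter (fun e =>
        (∃ x ∈ e, G.Adj i x) ∧ ∃ x ∈ e, ¬ G.Adj i x))
    (hnone : pairsNone = allPairs.filter (fun e => ∀ x ∈ e, ¬ G.Adj i x))
    (hτ : τ = ((allPairs.filter (fun e => ∀ x ∈ e, G.Adj i x)).filter
        (fun e => e ∈ G.edgeSet)).card)
    (θ : ℝ)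
    (hθone : (∑ e ∈ pairsOne, if e ∈ G.edgeSet then p else 1 - p)
        = (d : ℝ) * ((N : ℝ) - d - 1) * θ)
    (hθnone : (∑ e ∈ pairsNone, if e ∈ G.edgeSet then p else 1 - p)
        = (1 / 2) * ((N : ℝ) - d - 1) * ((N : ℝ) - d - 2) * θ)
    (R : ℝ → ℝ)
    (hR : ∀ x, R x = (1 / (p ^ 2 * (2 * p - 1))) *
        (x - (1 / 2) * (d : ℝ) * ((d : ℝ) - 1) * p ^ 2 * (1 - p)
          - (d : ℝ) * ((N : ℝ) - d - 1) * p * (1 - p) * θ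
          - (1 / 2) * ((N : ℝ) - d - 1) * ((N : ℝ) - d - 2) * (1 - p) ^ 2 * θ)) :
    R (∑ f : Sym2 V → Bool, rrWeight G p f *
        ((allPairs.filter (fun e =>
            f e = true ∧ ∀ x ∈ e, f s(i, x) = true)).card : ℝ))
      = (τ : ℝ) := by
  have hs : ∀ e ∈ allPairs, ¬ e.IsDiag ∧ i ∉ e := fun e he => by
    rw [hall] at he
    exact (mem_filter.1 he).2
  have hboth : ∑ e ∈ allPairs.filter (fun e => ∀ x ∈ e, G.Adj i x), rrBitProb G p e
      = p * τ + (1 - p) * (d * (d - 1) / 2 - τ) := by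
    rw [sum_rrBitProb, ← hτ, hall, card_filter_forall_adj, ← hd, Nat.cast_choose_two]
  have hone' : ∑ e ∈ pairsOne, rrBitProb G p e = d * (N - d - 1) * θ := hθone
  have hnone' : ∑ e ∈ pairsNone, rrBitProb G p e = 1 / 2 * (N - d - 1) * (N - d - 2) * θ := hθnone
  change R (rrExpect G p _) = _
  rw [hR, rrExpect_card_filter_triangle G p hs, hboth, ← hone, ← hnone, hone', hnone', one_div,
    inv_mul_eq_iff_eq_mul₀ hp]
  ring

/-- Fix a node `i` of a finite simple graph `G` on `N` vertices with degree
`d` and incident triangle count `τ`; perturb every adjacency bit independently by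
randomized response with keep probability `p` with `p²(2p−1) ≠ 0`. Let `τ̃ᵢ` count the
pairs `{j,k}` of vertices distinct from `i` whose three perturbed bits all equal 1.
Suppose the perturbed degree reported for `i` equals `d`, and there is `θ̃` with
`Σ_{exactly one neighbor} q_{jk} = d(N−d−1)·θ̃` and
`Σ_{neither neighbor} q_{jk} = (1/2)(N−d−1)(N−d−2)·θ̃` (`q_{jk} = p` if `{j,k}` is an
edge, else `1−p`). Then the calibration function applied to the expected perturbed
triangle count recovers the true triangle count: `R(E[τ̃ᵢ]) = τ`. -/
theorem calibration_of_expected_triangle_count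
    {V : Type*} [Fintype V] [DecidableEq V]
    (G : SimpleGraph V) [DecidableRel G.Adj]
    (p : ℝ) (hp0 : 0 ≤ p) (hp1 : p ≤ 1)
    (hp : p ^ 2 * (2 * p - 1) ≠ 0) (i : V)
    (N d τ : ℕ) (hN : N = Fintype.card V) (hd : d = G.degree i)
    (allPairs pairsOne pairsNone : Finset (Sym2 V))
    (hall : allPairs = univ.filter (fun e : Sym2 V => ¬ e.IsDiag ∧ i ∉ e))
    (hone : pairsOne = allPairs.filter (fun e =>
        (∃ x ∈ e, G.Adj i x) ∧ ∃ x ∈ e, ¬ G.Adj i x))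
    (hnone : pairsNone = allPairs.filter (fun e => ∀ x ∈ e, ¬ G.Adj i x))
    (hτ : τ = ((allPairs.filter (fun e => ∀ x ∈ e, G.Adj i x)).filter
        (fun e => e ∈ G.edgeSet)).card)
    (θ : ℝ)
    (hθone : (∑ e ∈ pairsOne, if e ∈ G.edgeSet then p else 1 - p)
        = (d : ℝ) * ((N : ℝ) - d - 1) * θ)
    (hθnone : (∑ e ∈ pairsNone, if e ∈ G.edgeSet then p else 1 - p)
        = (1 / 2) * ((N : ℝ) - d - 1) * ((N : ℝ) - d - 2) * θ)
    (R : ℝ → ℝ)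
    (hR : ∀ x, R x = (1 / (p ^ 2 * (2 * p - 1))) *
        (x - (1 / 2) * (d : ℝ) * ((d : ℝ) - 1) * p ^ 2 * (1 - p)
          - (d : ℝ) * ((N : ℝ) - d - 1) * p * (1 - p) * θ
          - (1 / 2) * ((N : ℝ) - d - 1) * ((N : ℝ) - d - 2) * (1 - p) ^ 2 * θ)) :
    R (∑ f : Sym2 V → Bool, rrWeight G p f *
        ((allPairs.filter (fun e =>
            f e = true ∧ ∀ x ∈ e, f s(i, x) = true)).card : ℝ))
      = (τ : ℝ) :=
  calibration_of_expected_triangle_count_general G p hp i N d τ hd allPairs pairsOne pairsNone hall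
    hone hnone hτ θ hθone hθnone R hR
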